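/- Let k be a perfect field and R = k[X_1,…,X_m,Y,Z,T]/(G) an affine domain, G = vY + h − f(Z,T), where v = ∏ p_i^{s_i} is a prime factorization in k[X_1,…,X_m], with s_j = 1 for some j and p_j dividing h in k[X_1,…,X_m,Z,T]. If R is a regular ring, then k[Z,T]/(f(Z,T)) is a regular ring. -/

import Mathlib

noncomputable section
open MvPolynomial

/-- The embedding `k[X_1,…,X_m] → k[X_1,…,X_m,Y,Z,T]` (`Y,Z,T` are `Sum.inr 0,1,2`). -/
def embXv (k : Type) [Field k] (m : ℕ) :
    MvPolynomial (Fin m) k →ₐ[k] MvPolynomial (Fin m ⊕ Fin 3) k :=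
  rename Sum.inl

/-- The embedding `k[X_1,…,X_m,Z,T] → k[X_1,…,X_m,Y,Z,T]`. -/
def embHv (k : Type) [Field k] (m : ℕ) :
    MvPolynomial (Fin m ⊕ Fin 2) k →ₐ[k] MvPolynomial (Fin m ⊕ Fin 3) k :=
  rename (Sum.map id Fin.succ)

/-- The embedding `k[Z,T] → k[X_1,…,X_m,Y,Z,T]`. -/
def embFv (k : Type) [Field k] (m : ℕ) :
    MvPolynomial (Fin 2) k →ₐ[k] MvPolynomial (Fin m ⊕ Fin 3) k :=
  rename (fun j => Sum.inr j.succ)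

/-- The polynomial `G = v·Y + h - f(Z,T)` in `k[X_1,…,X_m,Y,Z,T]`. -/
def Gpoly (k : Type) [Field k] (m : ℕ) (v : MvPolynomial (Fin m) k)
    (h : MvPolynomial (Fin m ⊕ Fin 2) k) (f : MvPolynomial (Fin 2) k) :
    MvPolynomial (Fin m ⊕ Fin 3) k :=
  embXv k m v * MvPolynomial.X (Sum.inr 0) + embHv k m h - embFv k m f

/-- The Jacobian criterion for regularity of `k[X_1,…,X_m,Y,Z,T]/(G)` over a perfect
field `k`: the ideal generated by `G` and all its partial derivatives is the unit ideal. -/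
def JacRegular (k : Type) [Field k] (m : ℕ) (v : MvPolynomial (Fin m) k)
    (h : MvPolynomial (Fin m ⊕ Fin 2) k) (f : MvPolynomial (Fin 2) k) : Prop :=
  Ideal.span ({Gpoly k m v h f} ∪
      Set.range fun i : Fin m ⊕ Fin 3 => pderiv i (Gpoly k m v h f)) = ⊤

/-- The Jacobian criterion for regularity of `k[Z,T]/(f)` over a perfect field `k`. -/
def JacRegularf (k : Type) [Field k] (f : MvPolynomial (Fin 2) k) : Prop :=
  Ideal.span {f, pderiv 0 f, pderiv 1 f} = ⊤

/-!
Write `p = p_j`, `v = p w` with `p ∤ w` and `h = p q`, and let `E` be the fraction field of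
`k[X]/(p)`, where `w` becomes a unit. The `k`-algebra map `k[X,Y,Z,T] → E[Z,T]` sending `X` to
its residue, `Y` to `-q/w` and fixing `Z, T` sends `G` to `-f`, `∂G/∂Y = v` to `0`,
`∂G/∂Xᵢ = (∂v/∂Xᵢ) Y + ∂h/∂Xᵢ` to `(∂p/∂Xᵢ)(w Y + q) = 0`, and `∂G/∂Z, ∂G/∂T` to
`-∂f/∂Z, -∂f/∂T`. Hence the Jacobian ideal of `f` is the unit ideal over `E`, and therefore
already over `k`, because `E[Z,T]` is faithfully flat over `k[Z,T]`.
-/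

attribute [local instance] algebraMvPolynomial in
theorem MvPolynomial.ideal_eq_top_of_map_eq_top {σ K L : Type*} [Field K] [CommRing L]
    [Nontrivial L] [Algebra K L] {I : Ideal (MvPolynomial σ K)}
    (h : I.map (map (algebraMap K L)) = ⊤) : I = ⊤ := by
  have : Module.Free (MvPolynomial σ K) (MvPolynomial σ L) :=
    .of_equiv (Algebra.IsPushout.equiv K (MvPolynomial σ K) L (MvPolynomial σ L)).toLinearEquiv
  rw [← Ideal.comap_map_eq_self_of_faithfullyFlat (B := MvPolynomial σ L) I]
  exact (congrArg (Ideal.comap _) h).trans Ideal.comap_top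

theorem MvPolynomial.pderiv_rename_of_notMem_range {R σ τ : Type*} [CommSemiring R]
    {f : σ → τ} {j : τ} (hj : j ∉ Set.range f) (φ : MvPolynomial σ R) :
    pderiv j (rename f φ) = 0 := by
  classical
  refine pderiv_eq_zero_of_notMem_vars fun hmem => hj ?_
  obtain ⟨i, -, rfl⟩ := mem_vars_rename f φ hmem
  exact ⟨i, rfl⟩

theorem not_dvd_prod_pow_of_not_associated {M ι : Type*} [CommMonoidWithZero M]
    [IsCancelMulZero M] {p : ι → M} (hprime : ∀ i, Prime (p i))
    (hdist : ∀ i j, i ≠ j → ¬ Associated (p i) (p j)) (s : ι → ℕ) {t : Finset ι} {j : ι}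
    (hj : j ∉ t) : ¬ p j ∣ ∏ i ∈ t, p i ^ s i := by
  intro hdvd
  obtain ⟨i, hi, hdvd_pow⟩ := ((hprime j).dvd_finsetProd_iff _).mp hdvd
  exact hdist j i (ne_of_mem_of_not_mem hi hj).symm
    ((hprime j).associated_of_dvd (hprime i) ((hprime j).dvd_of_dvd_pow hdvd_pow))

section Embeddings

variable {k : Type} [Field k] {m : ℕ}

theorem pderiv_inl_embXv (i : Fin m) (r : MvPolynomial (Fin m) k) :
    pderiv (Sum.inl i) (embXv k m r) = embXv k m (pderiv i r) :=
  pderiv_rename Sum.inl_injective i r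

theorem pderiv_inr_embXv (b : Fin 3) (r : MvPolynomial (Fin m) k) :
    pderiv (Sum.inr b) (embXv k m r) = 0 :=
  pderiv_rename_of_notMem_range (by simp) r

theorem pderiv_inl_embHv (i : Fin m) (r : MvPolynomial (Fin m ⊕ Fin 2) k) :
    pderiv (Sum.inl i) (embHv k m r) = embHv k m (pderiv (Sum.inl i) r) :=
  pderiv_rename ((Function.injective_id).sumMap (Fin.succ_injective _)) (Sum.inl i) r

theorem pderiv_inr_succ_embHv (b : Fin 2) (r : MvPolynomial (Fin m ⊕ Fin 2) k) :
    pderiv (Sum.inr b.succ) (embHv k m r) = embHv k m (pderiv (Sum.inr b) r) :=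
  pderiv_rename ((Function.injective_id).sumMap (Fin.succ_injective _)) (Sum.inr b) r

theorem pderiv_inr_zero_embHv (r : MvPolynomial (Fin m ⊕ Fin 2) k) :
    pderiv (Sum.inr 0) (embHv k m r) = 0 :=
  pderiv_rename_of_notMem_range (by rintro ⟨_ | b, hb⟩ <;> simp_all [Fin.succ_ne_zero]) r

theorem pderiv_inl_embFv (i : Fin m) (r : MvPolynomial (Fin 2) k) :
    pderiv (Sum.inl i) (embFv k m r) = 0 :=
  pderiv_rename_of_notMem_range (by simp) r

theorem pderiv_inr_zero_embFv (r : MvPolynomial (Fin 2) k) :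
    pderiv (Sum.inr 0) (embFv k m r) = 0 :=
  pderiv_rename_of_notMem_range (by simp [Fin.succ_ne_zero]) r

theorem pderiv_inr_succ_embFv (b : Fin 2) (r : MvPolynomial (Fin 2) k) :
    pderiv (Sum.inr b.succ) (embFv k m r) = embFv k m (pderiv b r) :=
  pderiv_rename (fun _ _ hab => Fin.succ_injective _ (Sum.inr_injective hab)) b r

end Embeddings

section Gpoly

variable {k : Type} [Field k] {m : ℕ} (v : MvPolynomial (Fin m) k)
  (h : MvPolynomial (Fin m ⊕ Fin 2) k) (f : MvPolynomial (Fin 2) k)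

theorem pderiv_inl_Gpoly (i : Fin m) :
    pderiv (Sum.inl i) (Gpoly k m v h f) =
      embXv k m (pderiv i v) * X (Sum.inr 0) + embHv k m (pderiv (Sum.inl i) h) := by
  simp [Gpoly, pderiv_inl_embXv, pderiv_inl_embHv, pderiv_inl_embFv, mul_comm]

theorem pderiv_inr_zero_Gpoly : pderiv (Sum.inr 0) (Gpoly k m v h f) = embXv k m v := by
  simp [Gpoly, pderiv_inr_embXv, pderiv_inr_zero_embHv, pderiv_inr_zero_embFv]

theorem pderiv_inr_succ_Gpoly (b : Fin 2) :
    pderiv (Sum.inr b.succ) (Gpoly k m v h f) =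
      embHv k m (pderiv (Sum.inr b) h) - embFv k m (pderiv b f) := by
  simp [Gpoly, pderiv_inr_embXv, pderiv_inr_succ_embHv, pderiv_inr_succ_embFv, Fin.succ_ne_zero]

end Gpoly

section Evaluation

variable {k E : Type} [Field k] [CommRing E] [Algebra k E] {m : ℕ}
  (ρ : MvPolynomial (Fin m) k →ₐ[k] E)

def evalXZT : MvPolynomial (Fin m ⊕ Fin 2) k →ₐ[k] MvPolynomial (Fin 2) E :=
  aeval (Sum.elim (fun i => C (ρ (X i))) X)

def evalXYZT (y : MvPolynomial (Fin 2) E) :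
    MvPolynomial (Fin m ⊕ Fin 3) k →ₐ[k] MvPolynomial (Fin 2) E :=
  aeval (Sum.elim (fun i => C (ρ (X i))) (Fin.cons y X))

theorem aeval_C_algHom_apply_X {σ τ : Type*} (ρ : MvPolynomial σ k →ₐ[k] E)
    (r : MvPolynomial σ k) :
    aeval (fun i => (C (ρ (X i)) : MvPolynomial τ E)) r = C (ρ r) := by
  induction r using MvPolynomial.induction_on with
  | C a => simp
  | add p q hp hq => simp [hp, hq]
  | mul_X p i hp => simp [hp]

theorem evalXZT_rename_inl (r : MvPolynomial (Fin m) k) :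
    evalXZT ρ (rename Sum.inl r) = C (ρ r) := by
  rw [evalXZT, aeval_rename]
  exact aeval_C_algHom_apply_X ρ r

theorem evalXYZT_embXv (y : MvPolynomial (Fin 2) E) (r : MvPolynomial (Fin m) k) :
    evalXYZT ρ y (embXv k m r) = C (ρ r) := by
  rw [evalXYZT, embXv, aeval_rename]
  exact aeval_C_algHom_apply_X ρ r

theorem evalXYZT_embHv (y : MvPolynomial (Fin 2) E) (r : MvPolynomial (Fin m ⊕ Fin 2) k) :
    evalXYZT ρ y (embHv k m r) = evalXZT ρ r := by
  rw [evalXYZT, embHv, aeval_rename, evalXZT]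
  congr 2
  ext (i | b) <;> rfl

theorem evalXYZT_embFv (y : MvPolynomial (Fin 2) E) (r : MvPolynomial (Fin 2) k) :
    evalXYZT ρ y (embFv k m r) = map (algebraMap k E) r := by
  rw [evalXYZT, embFv, aeval_rename, ← aeval_map_algebraMap E]
  exact aeval_X_left_apply _

theorem evalXYZT_X_inr_zero (y : MvPolynomial (Fin 2) E) :
    evalXYZT ρ y (X (Sum.inr 0)) = y := by
  simp [evalXYZT]

end Evaluation

theorem jacRegularf_of_jacRegular_of_algHom {k E : Type} [Field k] [Field E] [Algebra k E]
    {m : ℕ} {v : MvPolynomial (Fin m) k} {h : MvPolynomial (Fin m ⊕ Fin 2) k}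
    {f : MvPolynomial (Fin 2) k} (ρ : MvPolynomial (Fin m) k →ₐ[k] E)
    {p w : MvPolynomial (Fin m) k} {q : MvPolynomial (Fin m ⊕ Fin 2) k}
    (hv : v = p * w) (hh : h = rename Sum.inl p * q) (hp : ρ p = 0) (hw : ρ w ≠ 0)
    (hreg : JacRegular k m v h f) : JacRegularf k f := by
  have hy : C (ρ w) * -(C (ρ w)⁻¹ * evalXZT ρ q) + evalXZT ρ q = 0 := by
    rw [mul_neg, ← mul_assoc, ← C_mul, mul_inv_cancel₀ hw, C_1, one_mul, neg_add_cancel]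
  set y : MvPolynomial (Fin 2) E := -(C (ρ w)⁻¹ * evalXZT ρ q)
  have hρv : ρ v = 0 := by rw [hv, map_mul, hp, zero_mul]
  have hρp : evalXZT ρ (rename Sum.inl p) = 0 := by rw [evalXZT_rename_inl, hp, C_0]
  set J := (Ideal.span {f, pderiv 0 f, pderiv 1 f}).map (map (algebraMap k E))
  have hJ : ∀ g ∈ ({f, pderiv 0 f, pderiv 1 f} : Set (MvPolynomial (Fin 2) k)),
      -map (algebraMap k E) g ∈ J :=
    fun g hg => J.neg_mem (Ideal.mem_map_of_mem _ (Ideal.subset_span hg))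
  apply MvPolynomial.ideal_eq_top_of_map_eq_top (L := E)
  rw [eq_top_iff, ← Ideal.map_top (evalXYZT ρ y), ← hreg, Ideal.map_span, Ideal.span_le]
  rintro _ ⟨g, rfl | ⟨i | b, rfl⟩, rfl⟩
  · have : evalXYZT ρ y (Gpoly k m v h f) = -map (algebraMap k E) f := by
      simp [Gpoly, evalXYZT_embXv, evalXYZT_embHv, evalXYZT_embFv, hρv, hh, hρp]
    rw [this]
    exact hJ f (by simp)
  · have : evalXYZT ρ y (pderiv (Sum.inl i) (Gpoly k m v h f)) =
        C (ρ (pderiv i p)) * (C (ρ w) * y + evalXZT ρ q) := by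
      simp [pderiv_inl_Gpoly, evalXYZT_embXv, evalXYZT_embHv, evalXYZT_X_inr_zero, hv, hh, hp, hρp,
        pderiv_rename Sum.inl_injective, evalXZT_rename_inl]
      ring
    simp [this, hy]
  · cases b using Fin.cases with
    | zero => simp [pderiv_inr_zero_Gpoly, evalXYZT_embXv, hρv]
    | succ b =>
      have : evalXYZT ρ y (pderiv (Sum.inr b.succ) (Gpoly k m v h f)) =
          -map (algebraMap k E) (pderiv b f) := by
        simp [pderiv_inr_succ_Gpoly, evalXYZT_embHv, evalXYZT_embFv, hh, hρp,
          pderiv_rename_of_notMem_range (show Sum.inr b ∉ Set.range Sum.inl by simp)]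
      rw [this]
      exact hJ _ (by fin_cases b <;> simp)

theorem stmt9_general (k : Type) [Field k] (m : ℕ)
    (v : MvPolynomial (Fin m) k) (h : MvPolynomial (Fin m ⊕ Fin 2) k)
    (f : MvPolynomial (Fin 2) k)
    (n : ℕ) (p : Fin n → MvPolynomial (Fin m) k) (s : Fin n → ℕ)
    (hprime : ∀ i, Prime (p i))
    (hdist : ∀ i j, i ≠ j → ¬ Associated (p i) (p j))
    (hfact : v = ∏ i, p i ^ s i)
    (j : Fin n) (hsj : s j = 1)
    (hdvd : (rename (Sum.inl : Fin m → Fin m ⊕ Fin 2) (p j)) ∣ h)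
    (hreg : JacRegular k m v h f) :
    JacRegularf k f := by
  classical
  set w := ∏ i ∈ Finset.univ.erase j, p i ^ s i
  have hv : v = p j * w := by
    rw [hfact, ← Finset.mul_prod_erase _ _ (Finset.mem_univ j), hsj, pow_one]
  have hw : ¬ p j ∣ w :=
    not_dvd_prod_pow_of_not_associated hprime hdist s (Finset.notMem_erase j _)
  obtain ⟨q, hh⟩ := hdvd
  let D := MvPolynomial (Fin m) k ⧸ Ideal.span {p j}
  have : (Ideal.span {p j}).IsPrime :=
    (Ideal.span_singleton_prime (hprime j).ne_zero).mpr (hprime j)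
  let ρ := (IsScalarTower.toAlgHom k D (FractionRing D)).comp (Ideal.Quotient.mkₐ k _)
  refine jacRegularf_of_jacRegular_of_algHom ρ hv hh ?_ ?_ hreg
  · change algebraMap D _ (Ideal.Quotient.mk _ (p j)) = 0
    rw [Ideal.Quotient.eq_zero_iff_mem.mpr (Ideal.mem_span_singleton_self _), map_zero]
  · change algebraMap D _ (Ideal.Quotient.mk _ w) ≠ 0
    rwa [ne_eq, IsFractionRing.to_map_eq_zero_iff, Ideal.Quotient.eq_zero_iff_mem,
      Ideal.mem_span_singleton]

/-- Lemma 3.9, case (I). If `v = ∏ pᵢ^{sᵢ}` with `s_j = 1` and `p_j ∣ h`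
for some `j`, and `R = k[X_1,…,X_m,Y,Z,T]/(G)` is regular, then `k[Z,T]/(f)` is regular. -/
theorem stmt9 (k : Type) [Field k] [PerfectField k] (m : ℕ)
    (v : MvPolynomial (Fin m) k) (h : MvPolynomial (Fin m ⊕ Fin 2) k)
    (f : MvPolynomial (Fin 2) k)
    (hdom : (Ideal.span {Gpoly k m v h f}).IsPrime)
    (n : ℕ) (p : Fin n → MvPolynomial (Fin m) k) (s : Fin n → ℕ)
    (hprime : ∀ i, Prime (p i)) (hs : ∀ i, 0 < s i)
    (hdist : ∀ i j, i ≠ j → ¬ Associated (p i) (p j))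
    (hfact : v = ∏ i, p i ^ s i)
    (j : Fin n) (hsj : s j = 1)
    (hdvd : (rename (Sum.inl : Fin m → Fin m ⊕ Fin 2) (p j)) ∣ h)
    (hreg : JacRegular k m v h f) :
    JacRegularf k f :=
  stmt9_general k m v h f n p s hprime hdist hfact j hsj hdvd hreg
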